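/- Let E be a strongly archimedean convex SEA with property A which is spectral (with respect to its canonical compression base), let a∈E and let a^k=a∘⋯∘a denote the k-fold sequential power. Then (a^k)_{k∈ℕ} is a descending sequence of mutually commuting elements, the infimum ⋀_k a^k exists, and it equals the floor a_∘ of a. -/

import Mathlib

universe u

/-- An effect algebra: the partially defined sum `⊕` is encoded via `Option`. -/
class EffectAlgebra (E : Type u) where
  oplus : E → E → Option E
  zero : E
  one : E
  oplus_comm : ∀ a b : E, oplus a b = oplus b a
  oplus_assoc : ∀ {a b c ab abc : E}, oplus a b = some ab → oplus ab c = some abc →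
    ∃ bc : E, oplus b c = some bc ∧ oplus a bc = some abc
  exists_perp : ∀ a : E, ∃ b : E, oplus a b = some one
  perp_unique : ∀ {a b c : E}, oplus a b = some one → oplus a c = some one → b = c
  oplus_one : ∀ {a b : E}, oplus a one = some b → a = zero

namespace EffectAlgebra

variable {E : Type u} [EffectAlgebra E]

/-- The orthosupplement `a^⊥`. -/
noncomputable def perp (a : E) : E := Classical.choose (exists_perp a)

/-- The partial order: `a ≤ b` iff `a ⊕ c = b` for some `c`. -/
def le (a b : E) : Prop := ∃ c : E, oplus a c = some b

/-- Sharp elements. -/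
def Sharp (a : E) : Prop := ∀ x : E, le x a → le x (perp a) → x = zero

/-- Finite orthosums of lists of elements. -/
def osum : List E → Option E
  | [] => some zero
  | a :: l => (osum l).bind fun s => oplus a s

/-- Mackey compatibility `a ↔ b`. -/
def MCompat (a b : E) : Prop :=
  ∃ a₁ b₁ c s t : E, oplus a₁ b₁ = some s ∧ oplus s c = some t ∧
    oplus a₁ c = some a ∧ oplus b₁ c = some b

/-- `a` is the supremum of the sequence `f`. -/
def IsSupSeq (f : ℕ → E) (a : E) : Prop :=
  (∀ n, le (f n) a) ∧ ∀ b : E, (∀ n, le (f n) b) → le a b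

/-- `a` is the infimum of the sequence `f`. -/
def IsInfSeq (f : ℕ → E) (a : E) : Prop :=
  (∀ n, le a (f n)) ∧ ∀ b : E, (∀ n, le b (f n)) → le b a

/-- `a` is the infimum of the set `S`. -/
def IsInfSet (S : Set E) (a : E) : Prop :=
  (∀ x ∈ S, le a x) ∧ ∀ b : E, (∀ x ∈ S, le b x) → le b a

/-- `a` is the supremum of `f` computed inside the subset `S`. -/
def IsSupSeqIn (S : Set E) (f : ℕ → E) (a : E) : Prop :=
  a ∈ S ∧ (∀ n, le (f n) a) ∧ ∀ b ∈ S, (∀ n, le (f n) b) → le a b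

variable (E) in
/-- Monotone σ-completeness: every ascending sequence has a supremum. -/
def MonotoneSigmaComplete : Prop :=
  ∀ f : ℕ → E, (∀ n, le (f n) (f (n + 1))) → ∃ a : E, IsSupSeq f a

end EffectAlgebra

open EffectAlgebra in
/-- A compression base `(J_p)_{p ∈ P}` on an effect algebra. -/
structure CompressionBase (E : Type u) [EffectAlgebra E] where
  P : Set E
  J : E → E → E
  zero_mem : zero ∈ P
  one_mem : one ∈ P
  perp_mem : ∀ p ∈ P, perp p ∈ P
  oplus_mem : ∀ p ∈ P, ∀ q ∈ P, ∀ r : E, oplus p q = some r → r ∈ P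
  normal : ∀ e f d s t x y : E, oplus e f = some s → oplus s d = some t →
    oplus e d = some x → x ∈ P → oplus f d = some y → y ∈ P → d ∈ P
  additive : ∀ p ∈ P, ∀ a b c : E, oplus a b = some c →
    oplus (J p a) (J p b) = some (J p c)
  retraction : ∀ p ∈ P, ∀ a : E, le a p → J p a = a
  focus : ∀ p ∈ P, J p one = p
  compression : ∀ p ∈ P, ∀ a : E, (J p a = zero ↔ le a (perp p))
  compose : ∀ p ∈ P, ∀ q ∈ P, ∀ r ∈ P, ∀ s t qr : E,
    oplus p q = some s → oplus s r = some t → oplus q r = some qr →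
    ∀ a : E, J s (J qr a) = J q a

namespace CompressionBase

open EffectAlgebra

variable {E : Type u} [EffectAlgebra E] (cb : CompressionBase E)

/-- The commutant `C(p)` of a projection `p`. -/
noncomputable def Cset (p : E) : Set E :=
  {a : E | oplus (cb.J p a) (cb.J (perp p) a) = some a}

/-- `PC(a)`: projections compatible with `a`. -/
noncomputable def PC (a : E) : Set E := {p : E | p ∈ cb.P ∧ a ∈ cb.Cset p}

/-- The P-bicommutant `P(a) = PC(PC(a) ∪ {a})`. -/
noncomputable def Pbicomm (a : E) : Set E :=
  {p : E | p ∈ cb.P ∧ a ∈ cb.Cset p ∧ ∀ q ∈ cb.PC a, q ∈ cb.Cset p}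

/-- `p` is the projection cover of `a`. -/
def IsProjCover (a p : E) : Prop :=
  p ∈ cb.P ∧ ∀ q ∈ cb.P, (le a q ↔ le p q)

/-- The projection cover property. -/
def ProjCoverProp : Prop := ∀ a : E, ∃ p : E, cb.IsProjCover a p

/-- `B` is a Boolean subalgebra of the set of projections. -/
noncomputable def BooleanSub (B : Set E) : Prop :=
  B ⊆ cb.P ∧ zero ∈ B ∧ one ∈ B ∧ (∀ p ∈ B, perp p ∈ B) ∧
  (∀ p ∈ B, ∀ q ∈ B, MCompat p q) ∧
  (∀ p ∈ B, ∀ q ∈ B, ∀ r : E, oplus p q = some r → r ∈ B)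

/-- The b-property. -/
noncomputable def BProperty : Prop :=
  ∀ a : E, ∃ B : Set E, cb.BooleanSub B ∧
    ∀ p ∈ cb.P, (a ∈ cb.Cset p ↔ ∀ b ∈ B, b ∈ cb.Cset p)

/-- Commutativity `aCb` of b-elements. -/
noncomputable def CommuteC (a b : E) : Prop :=
  ∀ p ∈ cb.Pbicomm a, ∀ q ∈ cb.Pbicomm b, MCompat p q

/-- The b-comparability property. -/
noncomputable def BComparability : Prop :=
  cb.BProperty ∧
  ∀ e f : E, cb.CommuteC e f → ∃ p : E, p ∈ cb.Pbicomm e ∧ p ∈ cb.Pbicomm f ∧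
    le (cb.J p e) (cb.J p f) ∧ le (cb.J (perp p) f) (cb.J (perp p) e)

/-- Spectrality: projection cover property plus b-comparability. -/
noncomputable def Spectral : Prop := cb.ProjCoverProp ∧ cb.BComparability

/-- `p` is the floor of `a` (the largest projection below `a`). -/
def IsFloor (a p : E) : Prop :=
  p ∈ cb.P ∧ le p a ∧ ∀ q ∈ cb.P, le q a → le q p

end CompressionBase

open EffectAlgebra in
/-- A sequential effect algebra (SEA). -/
class SEA (E : Type u) [EffectAlgebra E] where
  seq : E → E → E
  seq_oplus : ∀ a b c d : E, oplus b c = some d →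
    oplus (seq a b) (seq a c) = some (seq a d)
  one_seq : ∀ a : E, seq one a = a
  seq_zero_symm : ∀ a b : E, seq a b = zero → seq b a = zero
  comm_perp : ∀ a b : E, seq a b = seq b a → seq a (perp b) = seq (perp b) a
  comm_assoc : ∀ a b c : E, seq a b = seq b a → seq a (seq b c) = seq (seq a b) c
  comm_seq : ∀ a b c : E, seq c a = seq a c → seq c b = seq b c →
    seq c (seq a b) = seq (seq a b) c
  comm_oplus : ∀ a b c d : E, seq c a = seq a c → seq c b = seq b c →
    oplus a b = some d → seq c d = seq d c

namespace EffectAlgebra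

variable {E : Type u} [EffectAlgebra E]

section SEAdefs

variable [SEA E]

/-- `a | b` : the sequential product commutes. -/
def Commutes (a b : E) : Prop := SEA.seq a b = SEA.seq b a

/-- The commutant `S'` of a subset. -/
def commutant (S : Set E) : Set E := {a : E | ∀ s ∈ S, Commutes a s}

/-- The bicommutant `S''`. -/
def bicommutant (S : Set E) : Set E := commutant (commutant S)

/-- A sub-SEA: a sub-effect algebra closed under the sequential product. -/
noncomputable def SubSEA (S : Set E) : Prop :=
  zero ∈ S ∧ one ∈ S ∧ (∀ a ∈ S, perp a ∈ S) ∧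
  (∀ a ∈ S, ∀ b ∈ S, ∀ c : E, oplus a b = some c → c ∈ S) ∧
  (∀ a ∈ S, ∀ b ∈ S, SEA.seq a b ∈ S)

/-- A commutative sub-SEA. -/
noncomputable def CommSubSEA (S : Set E) : Prop :=
  SubSEA S ∧ ∀ a ∈ S, ∀ b ∈ S, Commutes a b

/-- A maximal commutative sub-SEA. -/
noncomputable def MaxCommSubSEA (S : Set E) : Prop :=
  CommSubSEA S ∧ ∀ T : Set E, CommSubSEA T → S ⊆ T → T = S

/-- `C(p)` for the canonical compression base `J_p = p ∘ ·` of a SEA. -/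
noncomputable def sC (p : E) : Set E :=
  {a : E | oplus (SEA.seq p a) (SEA.seq (perp p) a) = some a}

/-- `PC(a)` for the canonical compression base. -/
noncomputable def sPC (a : E) : Set E := {p : E | Sharp p ∧ a ∈ sC p}

/-- The P-bicommutant `P(a)` for the canonical compression base. -/
noncomputable def sPbicomm (a : E) : Set E :=
  {p : E | Sharp p ∧ a ∈ sC p ∧ ∀ q ∈ sPC a, q ∈ sC p}

/-- `p` is the projection cover of `a` (canonical compression base). -/
noncomputable def sIsProjCover (a p : E) : Prop :=
  Sharp p ∧ ∀ q : E, Sharp q → (le a q ↔ le p q)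

variable (E) in
/-- The projection cover property (canonical compression base). -/
noncomputable def sProjCoverProp : Prop := ∀ a : E, ∃ p : E, sIsProjCover a p

/-- `B` is a Boolean subalgebra of the sharp elements. -/
noncomputable def sBooleanSub (B : Set E) : Prop :=
  (∀ p ∈ B, Sharp p) ∧ zero ∈ B ∧ one ∈ B ∧ (∀ p ∈ B, perp p ∈ B) ∧
  (∀ p ∈ B, ∀ q ∈ B, MCompat p q) ∧
  (∀ p ∈ B, ∀ q ∈ B, ∀ r : E, oplus p q = some r → r ∈ B)

variable (E) in
/-- The b-property (canonical compression base). -/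
noncomputable def sBProperty : Prop :=
  ∀ a : E, ∃ B : Set E, sBooleanSub B ∧
    ∀ p : E, Sharp p → (a ∈ sC p ↔ ∀ b ∈ B, b ∈ sC p)

/-- `aCb` (canonical compression base). -/
noncomputable def sCommuteC (a b : E) : Prop :=
  ∀ p ∈ sPbicomm a, ∀ q ∈ sPbicomm b, MCompat p q

variable (E) in
/-- The b-comparability property (canonical compression base). -/
noncomputable def sBComparability : Prop :=
  sBProperty E ∧
  ∀ e f : E, sCommuteC e f → ∃ p : E, p ∈ sPbicomm e ∧ p ∈ sPbicomm f ∧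
    le (SEA.seq p e) (SEA.seq p f) ∧
    le (SEA.seq (perp p) f) (SEA.seq (perp p) e)

variable (E) in
/-- Spectrality of a SEA with respect to its canonical compression base. -/
noncomputable def sSpectral : Prop := sProjCoverProp E ∧ sBComparability E

/-- `p` is the floor of `a` (canonical compression base). -/
noncomputable def sIsFloor (a p : E) : Prop :=
  Sharp p ∧ le p a ∧ ∀ q : E, Sharp q → le q a → le q p

variable (E) in
/-- Property A. -/
def PropertyA : Prop :=
  ∀ (f : ℕ → E) (a b : E), (∀ n, le (f n) (f (n + 1))) →
    (∀ m n, Commutes (f m) (f n)) → IsSupSeq f a →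
    (∀ n, Commutes (f n) b) → Commutes a b

variable (E) in
/-- A σ-SEA. -/
def SigmaSEA : Prop :=
  MonotoneSigmaComplete E ∧
  ∀ (f : ℕ → E) (m : E), (∀ n, le (f (n + 1)) (f n)) → IsInfSeq f m →
    ∀ b : E, IsInfSeq (fun n => SEA.seq b (f n)) (SEA.seq b m) ∧
      ((∀ n, Commutes b (f n)) → Commutes b m)

/-- Iterated sequential powers: `seqPow a n = a^(n+1)`. -/
def seqPow (a : E) : ℕ → E
  | 0 => a
  | n + 1 => SEA.seq a (seqPow a n)

end SEAdefs

end EffectAlgebra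

open EffectAlgebra in
/-- A convex effect algebra: scalar multiplication by reals in `[0,1]`. -/
class ConvexEA (E : Type u) [EffectAlgebra E] where
  smul : ℝ → E → E
  smul_smul : ∀ (l m : ℝ) (a : E), 0 ≤ l → l ≤ 1 → 0 ≤ m → m ≤ 1 →
    smul m (smul l a) = smul (l * m) a
  smul_add_coeff : ∀ (l m : ℝ) (a : E), 0 ≤ l → 0 ≤ m → l + m ≤ 1 →
    oplus (smul l a) (smul m a) = some (smul (l + m) a)
  smul_oplus : ∀ (l : ℝ) (a b c : E), 0 ≤ l → l ≤ 1 → oplus a b = some c →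
    oplus (smul l a) (smul l b) = some (smul l c)
  one_smul : ∀ a : E, smul 1 a = a

namespace EffectAlgebra

variable {E : Type u} [EffectAlgebra E]

section Convexdefs

variable [ConvexEA E]

variable (E) in
/-- Strong archimedeanity. -/
def StronglyArchimedean : Prop :=
  ∀ a b c : E,
    (∀ n : ℕ, ∃ d : E, oplus b (ConvexEA.smul (1 / (n + 1) : ℝ) c) = some d ∧ le a d) →
    le a b

/-- `DistLE a b ε` encodes `‖a - b‖ ≤ ε` in the order unit norm:
`(1/2)a ≤ (1/2)b ⊕ (ε/2)1` and symmetrically (with `ε` clamped to `[0,1]`). -/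
def DistLE (a b : E) (ε : ℝ) : Prop :=
  (∃ d : E, oplus (ConvexEA.smul (2⁻¹ : ℝ) b) (ConvexEA.smul (min ε 1 / 2) one) = some d ∧
    le (ConvexEA.smul (2⁻¹ : ℝ) a) d) ∧
  (∃ d : E, oplus (ConvexEA.smul (2⁻¹ : ℝ) a) (ConvexEA.smul (min ε 1 / 2) one) = some d ∧
    le (ConvexEA.smul (2⁻¹ : ℝ) b) d)

/-- Norm convergence of a sequence. -/
def NormLimit (f : ℕ → E) (a : E) : Prop :=
  ∀ ε : ℝ, 0 < ε → ∃ N : ℕ, ∀ n ≥ N, DistLE (f n) a ε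

/-- Cauchy sequences with respect to the order unit norm. -/
def CauchySeqE (f : ℕ → E) : Prop :=
  ∀ ε : ℝ, 0 < ε → ∃ N : ℕ, ∀ m ≥ N, ∀ n ≥ N, DistLE (f m) (f n) ε

variable (E) in
/-- Norm completeness. -/
def NormComplete : Prop := ∀ f : ℕ → E, CauchySeqE f → ∃ a : E, NormLimit f a

/-- A norm-closed subset. -/
def NormClosedSet (S : Set E) : Prop :=
  ∀ (f : ℕ → E) (a : E), (∀ n, f n ∈ S) → NormLimit f a → a ∈ S

/-- A norm-complete subset. -/
def NormCompleteSet (S : Set E) : Prop :=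
  ∀ f : ℕ → E, (∀ n, f n ∈ S) → CauchySeqE f → ∃ a ∈ S, NormLimit f a

/-- One-dimensional elements. -/
def OneDim (a : E) : Prop :=
  ∀ b : E, le b a → ∃ t : ℝ, 0 ≤ t ∧ t ≤ 1 ∧ b = ConvexEA.smul t a

/-- `l` is a representation of `a` as a simple element:
`a = ⊕ μ_i p_i` with `μ_i ∈ [0,1]`, `p_i` sharp and `⊕ p_i = 1`. -/
noncomputable def SimpleRep (a : E) (l : List (ℝ × E)) : Prop :=
  (∀ x ∈ l, x.1 ∈ Set.Icc (0 : ℝ) 1 ∧ Sharp x.2) ∧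
  osum (l.map Prod.snd) = some one ∧
  osum (l.map fun x => ConvexEA.smul x.1 x.2) = some a

/-- Simple elements. -/
noncomputable def SimpleElem (a : E) : Prop := ∃ l : List (ℝ × E), SimpleRep a l

/-- A reduced representation: strictly increasing coefficients, nonzero sharp elements. -/
noncomputable def ReducedRep (a : E) (l : List (ℝ × E)) : Prop :=
  SimpleRep a l ∧ (l.map Prod.fst).Chain' (· < ·) ∧ ∀ x ∈ l, x.2 ≠ zero

end Convexdefs

section SpecRes

variable [SEA E] [ConvexEA E]

/-- `p` is the spectral resolution of `a` (canonical compression base): a family of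
projections in the bicommutant of `a`, nondecreasing and right continuous on `[0,1]`,
with `J_{p_λ}(a) ≤ λ p_λ` and `λ p_λ^⊥ ≤ J_{p_λ^⊥}(a)`. -/
noncomputable def sIsSpecRes (a : E) (p : ℝ → E) : Prop :=
  (∀ l : ℝ, 0 ≤ l → l ≤ 1 → p l ∈ sPbicomm a) ∧
  (∀ l m : ℝ, 0 ≤ l → l ≤ m → m ≤ 1 → le (p l) (p m)) ∧
  (∀ l : ℝ, 0 ≤ l → l < 1 →
    IsInfSet {x : E | ∃ m : ℝ, l < m ∧ m ≤ 1 ∧ x = p m} (p l)) ∧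
  (∀ l : ℝ, 0 ≤ l → l ≤ 1 →
    le (SEA.seq (p l) a) (ConvexEA.smul l (p l)) ∧
    le (ConvexEA.smul l (perp (p l))) (SEA.seq (perp (p l)) a))

end SpecRes

end EffectAlgebra

namespace CompressionBase

open EffectAlgebra

variable {E : Type u} [EffectAlgebra E] [ConvexEA E] (cb : CompressionBase E)

/-- `p` is the spectral resolution of `a` with respect to the compression base `cb`. -/
noncomputable def IsSpecRes (a : E) (p : ℝ → E) : Prop :=
  (∀ l : ℝ, 0 ≤ l → l ≤ 1 → p l ∈ cb.Pbicomm a) ∧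
  (∀ l m : ℝ, 0 ≤ l → l ≤ m → m ≤ 1 → le (p l) (p m)) ∧
  (∀ l : ℝ, 0 ≤ l → l < 1 →
    IsInfSet {x : E | ∃ m : ℝ, l < m ∧ m ≤ 1 ∧ x = p m} (p l)) ∧
  (∀ l : ℝ, 0 ≤ l → l ≤ 1 →
    le (cb.J (p l) a) (ConvexEA.smul l (p l)) ∧
    le (ConvexEA.smul l (perp (p l))) (cb.J (perp (p l)) a))

end CompressionBase

/-!
The floor of `a` is `f = p^⊥` for the projection cover `p` of `a^⊥`. A sharp element below `a`
is fixed by `a ∘ ·`, hence by every power, so `f ≤ aᵏ`. Conversely let `b ≤ aᵏ` for all `k`,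
with projection cover `r`. For rational `q < 1`, `a` commutes (in the b-sense) with `q·1`, and
b-comparability yields a projection `p` with `p ∘ a ≤ q p` and `q p^⊥ ≤ p^⊥ ∘ a`. Then
`aᵏ ≤ q^(k+1) p ⊕ p^⊥`, so `b ≤ p^⊥` by strong archimedeanity, hence `r ≤ p^⊥`,
`q r ≤ q p^⊥ ≤ a` and `q r = r ∘ (q r) ≤ r ∘ a`. Letting `q → 1` gives `r ∘ a = r`, so
`r ≤ a`, `r ≤ f` and `b ≤ f`.
-/

namespace EffectAlgebra

variable {E : Type u} [EffectAlgebra E]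

lemma oplus_perp (a : E) : oplus a (perp a) = some one :=
  Classical.choose_spec (exists_perp a)

lemma perp_oplus (a : E) : oplus (perp a) a = some one :=
  oplus_comm a (perp a) ▸ oplus_perp a

lemma eq_perp_of_oplus_eq_one {a b : E} (h : oplus a b = some one) : b = perp a :=
  perp_unique h (oplus_perp a)

lemma perp_perp (a : E) : perp (perp a) = a :=
  (eq_perp_of_oplus_eq_one (perp_oplus a)).symm

lemma oplus_zero (a : E) : oplus a zero = some a := by
  have one_oplus_zero : oplus (one : E) zero = some one := by
    obtain ⟨b, hb⟩ := exists_perp (one : E)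
    have hb0 : b = zero := oplus_one (by rwa [oplus_comm] at hb)
    rwa [hb0] at hb
  obtain ⟨c, hc, hac⟩ := oplus_assoc (perp_oplus a) one_oplus_zero
  rwa [eq_perp_of_oplus_eq_one hac, perp_perp] at hc

lemma zero_oplus (a : E) : oplus zero a = some a :=
  oplus_comm a zero ▸ oplus_zero a

lemma oplus_left_cancel {a b c d : E} (hb : oplus a b = some d) (hc : oplus a c = some d) :
    b = c := by
  obtain ⟨e, hbe, hae⟩ := oplus_assoc hb (oplus_perp d)
  obtain ⟨e', hce, hae'⟩ := oplus_assoc hc (oplus_perp d)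
  obtain rfl : e = e' := (eq_perp_of_oplus_eq_one hae).trans (eq_perp_of_oplus_eq_one hae').symm
  have hea : oplus e a = some one := oplus_comm a e ▸ hae
  obtain ⟨w, hw, hbw⟩ := oplus_assoc hbe hea
  obtain ⟨w', hw', hcw⟩ := oplus_assoc hce hea
  obtain rfl : w = w' := Option.some.inj (hw.symm.trans hw')
  exact (eq_perp_of_oplus_eq_one (oplus_comm b w ▸ hbw)).trans
    (eq_perp_of_oplus_eq_one (oplus_comm c w ▸ hcw)).symm

lemma le.refl (a : E) : le a a := ⟨zero, oplus_zero a⟩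

lemma le.trans {a b c : E} (hab : le a b) (hbc : le b c) : le a c := by
  obtain ⟨u, hu⟩ := hab
  obtain ⟨v, hv⟩ := hbc
  obtain ⟨w, -, haw⟩ := oplus_assoc hu hv
  exact ⟨w, haw⟩

lemma le_of_oplus_left {a b s : E} (h : oplus a b = some s) : le a s := ⟨b, h⟩

lemma le_of_oplus_right {a b s : E} (h : oplus a b = some s) : le b s :=
  ⟨a, oplus_comm a b ▸ h⟩

lemma eq_zero_of_le_zero {a : E} (h : le a zero) : a = zero := by
  obtain ⟨c, hc⟩ := h
  obtain ⟨e, hce, hae⟩ := oplus_assoc hc (zero_oplus one)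
  rw [oplus_one hce, zero_oplus] at hce
  rw [← Option.some.inj hce] at hae
  exact oplus_one hae

lemma exists_oplus_of_le {a a' b s : E} (ha : le a a') (h : oplus a' b = some s) :
    ∃ t : E, oplus a b = some t ∧ le t s := by
  obtain ⟨c, hc⟩ := ha
  obtain ⟨e, hce, hae⟩ := oplus_assoc hc h
  obtain ⟨w, hba, hcw⟩ := oplus_assoc hce (oplus_comm a e ▸ hae)
  exact ⟨w, oplus_comm b a ▸ hba, ⟨c, oplus_comm c w ▸ hcw⟩⟩

lemma oplus_le_oplus {a a' b b' s s' : E} (ha : le a a') (hb : le b b')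
    (h : oplus a b = some s) (h' : oplus a' b' = some s') : le s s' := by
  obtain ⟨t, hab', hts'⟩ := exists_oplus_of_le ha h'
  obtain ⟨s'', hba, hs''t⟩ := exists_oplus_of_le hb (oplus_comm a b' ▸ hab')
  obtain rfl : s'' = s := Option.some.inj ((oplus_comm a b ▸ hba).symm.trans h)
  exact hs''t.trans hts'

lemma perp_le_perp {a b : E} (h : le a b) : le (perp b) (perp a) := by
  obtain ⟨c, hc⟩ := h
  obtain ⟨e, hce, hae⟩ := oplus_assoc hc (oplus_perp b)
  rw [eq_perp_of_oplus_eq_one hae] at hce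
  exact le_of_oplus_right hce

lemma perp_le_perp_iff {a b : E} : le (perp b) (perp a) ↔ le a b :=
  ⟨fun h => perp_perp a ▸ perp_perp b ▸ perp_le_perp h, perp_le_perp⟩

lemma perp_zero : perp (zero : E) = one :=
  (eq_perp_of_oplus_eq_one (zero_oplus one)).symm

lemma sharp_perp {p : E} (hp : Sharp p) : Sharp (perp p) := by
  intro x h1 h2
  rw [perp_perp] at h2
  exact hp x h2 h1

lemma MCompat.symm {a b : E} (h : MCompat a b) : MCompat b a := by
  obtain ⟨a₁, b₁, c, s, t, h1, h2, h3, h4⟩ := h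
  exact ⟨b₁, a₁, c, s, t, oplus_comm a₁ b₁ ▸ h1, h2, h4, h3⟩

lemma isFloor_perp_of_isProjCover {a p : E} (hp : sIsProjCover (perp a) p) :
    sIsFloor a (perp p) := by
  obtain ⟨hpS, hp⟩ := hp
  refine ⟨sharp_perp hpS, ?_, fun q hqS hqa => ?_⟩
  · exact perp_le_perp_iff.mp (by rw [perp_perp]; exact (hp p hpS).mpr (le.refl p))
  · rw [← perp_le_perp_iff, perp_perp]
    exact (hp (perp q) (sharp_perp hqS)).mp (perp_le_perp hqa)

def PreservesOplus (φ : E → E) : Prop :=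
  ∀ a b c : E, oplus a b = some c → oplus (φ a) (φ b) = some (φ c)

namespace PreservesOplus

variable {φ : E → E}

lemma map_zero (hφ : PreservesOplus φ) : φ zero = zero :=
  oplus_left_cancel (hφ zero zero zero (oplus_zero zero)) (oplus_zero _)

lemma map_le (hφ : PreservesOplus φ) {a b : E} (h : le a b) : le (φ a) (φ b) := by
  obtain ⟨c, hc⟩ := h
  exact ⟨φ c, hφ a c b hc⟩

lemma osum_map (hφ : PreservesOplus φ) :
    ∀ {l : List E} {s : E}, osum l = some s → osum (l.map φ) = some (φ s)
  | [], s, h => by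
    obtain rfl : zero = s := Option.some.inj h
    simp [osum, hφ.map_zero]
  | a :: l, s, h => by
    obtain ⟨t, ht, hat⟩ := Option.bind_eq_some_iff.mp h
    simp only [osum, List.map_cons, hφ.osum_map ht, Option.bind_some]
    exact hφ a t s hat

end PreservesOplus

section Convex

variable [ConvexEA E]

lemma preservesOplus_smul {t : ℝ} (h0 : 0 ≤ t) (h1 : t ≤ 1) :
    PreservesOplus (ConvexEA.smul t : E → E) :=
  fun a b c h => ConvexEA.smul_oplus t a b c h0 h1 h

lemma smul_zero_coeff (a : E) : ConvexEA.smul (0 : ℝ) a = zero := by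
  have h := ConvexEA.smul_add_coeff (0 : ℝ) 0 a le_rfl le_rfl (by norm_num)
  rw [add_zero] at h
  exact oplus_left_cancel h (oplus_zero _)

lemma smul_le_smul_of_le {s t : ℝ} (a : E) (hs : 0 ≤ s) (hst : s ≤ t) (ht : t ≤ 1) :
    le (ConvexEA.smul s a) (ConvexEA.smul t a) := by
  have h := ConvexEA.smul_add_coeff s (t - s) a hs (by linarith) (by linarith)
  rw [add_sub_cancel] at h
  exact le_of_oplus_left h

lemma smul_le {t : ℝ} (a : E) (h0 : 0 ≤ t) (h1 : t ≤ 1) : le (ConvexEA.smul t a) a := by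
  simpa [ConvexEA.one_smul] using smul_le_smul_of_le a h0 h1 le_rfl

lemma osum_replicate_smul (a : E) {t : ℝ} (ht : 0 ≤ t) :
    ∀ k : ℕ, (k : ℝ) * t ≤ 1 →
      osum (List.replicate k (ConvexEA.smul t a)) = some (ConvexEA.smul ((k : ℝ) * t) a)
  | 0, _ => by simp [osum, smul_zero_coeff]
  | k + 1, hk => by
    push_cast at hk
    have ih := osum_replicate_smul a ht k (by nlinarith)
    simp only [List.replicate_succ, osum, ih, Option.bind_some]
    rw [ConvexEA.smul_add_coeff t _ a ht (by positivity) (by linarith)]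
    congr 2
    push_cast
    ring

lemma exists_smul_oplus_perp (p : E) {t : ℝ} (h0 : 0 ≤ t) (h1 : t ≤ 1) :
    ∃ s : E, oplus (ConvexEA.smul t p) (perp p) = some s := by
  obtain ⟨s, hs, -⟩ := exists_oplus_of_le (smul_le p h0 h1) (oplus_perp p)
  exact ⟨s, hs⟩

lemma PreservesOplus.map_smul_rat {φ : E → E} (hφ : PreservesOplus φ) (a : E) {q : ℚ}
    (h0 : 0 ≤ q) (h1 : q ≤ 1) : φ (ConvexEA.smul (q : ℝ) a) = ConvexEA.smul (q : ℝ) (φ a) := by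
  obtain ⟨j, hj⟩ := Int.eq_ofNat_of_zero_le (Rat.num_nonneg.mpr h0)
  set n := q.den
  have hn : (0 : ℝ) < n := by exact_mod_cast q.den_pos
  have hu0 : (0 : ℝ) ≤ 1 / n := by positivity
  have hu1 : (1 : ℝ) / n ≤ 1 := by
    rw [div_le_one hn]; exact_mod_cast q.den_pos
  have hnu : (n : ℝ) * (1 / n) = 1 := by field_simp
  have hq : (q : ℝ) = (j : ℝ) * (1 / n) := by
    rw [Rat.cast_def, hj]; push_cast; ring
  have hjn : (j : ℝ) * (1 / n) ≤ 1 := by rw [← hq]; exact_mod_cast h1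
  -- Scaling `φ a = z ⊕ ⋯ ⊕ z` (`n` copies of `z = φ (1/n • a)`) by `1/n` gives
  -- `1/n • φ a = 1/n • z ⊕ ⋯ ⊕ 1/n • z = z`.
  have unit : φ (ConvexEA.smul (1 / n) a) = ConvexEA.smul (1 / n) (φ a) := by
    set z := φ (ConvexEA.smul (1 / n) a)
    have hz : osum (List.replicate n z) = some (φ a) := by
      have := hφ.osum_map (osum_replicate_smul a hu0 n hnu.le)
      rwa [List.map_replicate, hnu, ConvexEA.one_smul] at this
    have h := (preservesOplus_smul hu0 hu1).osum_map hz
    rw [List.map_replicate, osum_replicate_smul z hu0 n hnu.le, hnu, ConvexEA.one_smul] at h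
    exact Option.some.inj h
  have h := hφ.osum_map (osum_replicate_smul a hu0 j hjn)
  rw [List.map_replicate, unit, osum_replicate_smul (φ a) hu0 j hjn] at h
  rw [hq]
  exact (Option.some.inj h).symm

lemma eq_of_le_of_forall_smul_le (harch : StronglyArchimedean E) {x r : E} (hxr : le x r)
    (h : ∀ q : ℚ, 0 ≤ q → q < 1 → le (ConvexEA.smul (q : ℝ) r) x) : x = r := by
  obtain ⟨s, hs⟩ := hxr
  suffices hs0 : le s zero by
    rw [eq_zero_of_le_zero hs0, oplus_zero] at hs
    exact Option.some.inj hs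
  refine harch s zero r fun n => ⟨_, zero_oplus _, ?_⟩
  set q : ℚ := n / (n + 1)
  have hq : (q : ℝ) + 1 / ((n : ℝ) + 1) = 1 := by
    simp only [q]; push_cast; field_simp
  have hsplit : oplus (ConvexEA.smul (q : ℝ) r) (ConvexEA.smul (1 / ((n : ℝ) + 1)) r)
      = some r := by
    have := ConvexEA.smul_add_coeff (q : ℝ) (1 / ((n : ℝ) + 1)) r (by positivity)
      (by positivity) hq.le
    rwa [hq, ConvexEA.one_smul] at this
  obtain ⟨e, he⟩ := h q (by positivity) (by rw [div_lt_one (by positivity)]; linarith)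
  obtain ⟨u, hes, hu⟩ := oplus_assoc he hs
  exact oplus_left_cancel hu hsplit ▸ le_of_oplus_right hes

end Convex

section Sequential

variable [SEA E]

lemma preservesOplus_seq (a : E) : PreservesOplus (SEA.seq a) :=
  fun b c d h => SEA.seq_oplus a b c d h

lemma seq_zero (a : E) : SEA.seq a (zero : E) = zero :=
  (preservesOplus_seq a).map_zero

lemma seq_one (a : E) : SEA.seq a (one : E) = a := by
  have h : Commutes a zero := by
    rw [Commutes, seq_zero, SEA.seq_zero_symm a zero (seq_zero a)]
  have := SEA.comm_perp a zero h
  rwa [perp_zero, SEA.one_seq] at this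

lemma seq_le_seq (a : E) {b c : E} (h : le b c) : le (SEA.seq a b) (SEA.seq a c) :=
  (preservesOplus_seq a).map_le h

lemma seq_le (a b : E) : le (SEA.seq a b) a := by
  simpa [seq_one] using seq_le_seq a (le_of_oplus_left (oplus_perp b))

lemma seq_oplus_seq_perp (a b : E) :
    oplus (SEA.seq a b) (SEA.seq a (perp b)) = some a := by
  simpa [seq_one] using SEA.seq_oplus a b (perp b) one (oplus_perp b)

lemma commutes_of_seq_perp_eq_zero {a b : E} (h : SEA.seq a (perp b) = zero) : Commutes a b := by
  have := SEA.comm_perp a (perp b) (h.trans (SEA.seq_zero_symm _ _ h).symm)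
  rwa [perp_perp] at this

lemma seq_eq_self_of_seq_perp_eq_zero {a b : E} (h : SEA.seq a (perp b) = zero) :
    SEA.seq a b = a := by
  have := seq_oplus_seq_perp a b
  rw [h, oplus_zero] at this
  exact Option.some.inj this

lemma le_of_seq_perp_eq_zero {a b : E} (h : SEA.seq a (perp b) = zero) : le a b := by
  rw [← seq_eq_self_of_seq_perp_eq_zero h, commutes_of_seq_perp_eq_zero h]
  exact seq_le b a

lemma le_of_seq_eq_self {a b : E} (h : SEA.seq a b = a) : le a b := by
  apply le_of_seq_perp_eq_zero
  have := seq_oplus_seq_perp a b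
  rw [h] at this
  exact oplus_left_cancel this (oplus_zero a)

lemma Sharp.seq_perp {p : E} (hp : Sharp p) : SEA.seq p (perp p) = zero := by
  apply hp _ (seq_le p (perp p))
  rw [SEA.comm_perp p p rfl]
  exact seq_le (perp p) p

lemma Sharp.seq_self {p : E} (hp : Sharp p) : SEA.seq p p = p :=
  seq_eq_self_of_seq_perp_eq_zero hp.seq_perp

lemma Sharp.seq_eq_zero_of_le_perp {p x : E} (hp : Sharp p) (hx : le x (perp p)) :
    SEA.seq p x = zero :=
  eq_zero_of_le_zero (hp.seq_perp ▸ seq_le_seq p hx)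

lemma Sharp.commutes_of_le {p x : E} (hp : Sharp p) (hx : le x p) : Commutes x p := by
  apply commutes_of_seq_perp_eq_zero
  apply SEA.seq_zero_symm
  exact (sharp_perp hp).seq_eq_zero_of_le_perp ((perp_perp p).symm ▸ hx)

lemma Sharp.commutes_of_mem_sC {p a : E} (hp : Sharp p) (h : a ∈ sC p) : Commutes a p := by
  have hl : Commutes p (SEA.seq p a) := (hp.commutes_of_le (seq_le p a)).symm
  have hr : Commutes p (SEA.seq (perp p) a) := by
    have := SEA.comm_perp _ _ ((sharp_perp hp).commutes_of_le (seq_le (perp p) a))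
    rw [perp_perp] at this
    exact this.symm
  exact (SEA.comm_oplus _ _ p a hl hr h).symm

/-- The witnesses: `a = (a ∘ b) ⊕ a₁` and `b = (a ∘ b) ⊕ (a^⊥ ∘ b)`, where `a^⊥ ∘ b ≤ a^⊥`
makes the total sum defined. -/
lemma mcompat_of_mem_sC {a b : E} (h : b ∈ sC a) : MCompat a b := by
  set c := SEA.seq a b
  set b₁ := SEA.seq (perp a) b
  obtain ⟨a₁, ha₁⟩ := seq_le a b
  obtain ⟨u, hu⟩ := seq_le (perp a) b
  obtain ⟨w, hb₁a, -⟩ := oplus_assoc (oplus_comm b₁ u ▸ hu) (perp_oplus a)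
  obtain ⟨v, hcv, hav⟩ := oplus_assoc (oplus_comm c a₁ ▸ ha₁) (oplus_comm b₁ a ▸ hb₁a)
  obtain rfl : v = b := Option.some.inj (hcv.symm.trans h)
  obtain ⟨z, hb₁a₁, hcz⟩ := oplus_assoc h (oplus_comm a₁ v ▸ hav)
  exact ⟨a₁, b₁, c, z, w, oplus_comm b₁ a₁ ▸ hb₁a₁, oplus_comm c z ▸ hcz,
    oplus_comm c a₁ ▸ ha₁, oplus_comm c b₁ ▸ h⟩

lemma commutes_seqPow_self (a : E) : ∀ n : ℕ, Commutes a (seqPow a n)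
  | 0 => rfl
  | n + 1 => SEA.comm_seq a (seqPow a n) a rfl (commutes_seqPow_self a n)

lemma commutes_seqPow (a : E) : ∀ m n : ℕ, Commutes (seqPow a m) (seqPow a n)
  | 0, n => commutes_seqPow_self a n
  | m + 1, n =>
    (SEA.comm_seq a (seqPow a m) (seqPow a n) (commutes_seqPow_self a n).symm
      (commutes_seqPow a m n).symm).symm

lemma seqPow_succ_le (a : E) (n : ℕ) : le (seqPow a (n + 1)) (seqPow a n) := by
  show le (SEA.seq a (seqPow a n)) (seqPow a n)
  rw [commutes_seqPow_self a n]
  exact seq_le (seqPow a n) a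

lemma le_seqPow_of_sharp_le {a f : E} (hf : Sharp f) (hfa : le f a) (n : ℕ) :
    le f (seqPow a n) := by
  have hfa' : SEA.seq f (perp a) = zero := hf.seq_eq_zero_of_le_perp (perp_le_perp hfa)
  have haf : SEA.seq a f = f :=
    (commutes_of_seq_perp_eq_zero hfa').symm.trans (seq_eq_self_of_seq_perp_eq_zero hfa')
  have hpow : ∀ n : ℕ, SEA.seq (seqPow a n) f = f := by
    intro n
    induction n with
    | zero => exact haf
    | succ n ih =>
      show SEA.seq (SEA.seq a (seqPow a n)) f = f
      rw [← SEA.comm_assoc a (seqPow a n) f (commutes_seqPow_self a n), ih, haf]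
  exact hpow n ▸ seq_le (seqPow a n) f

variable [ConvexEA E]

lemma seqPow_le_smul_oplus_perp {a p : E} (hp : Sharp p) (hpa : a ∈ sC p) {q : ℚ}
    (h0 : 0 ≤ q) (h1 : q ≤ 1) (hle : le (SEA.seq p a) (ConvexEA.smul (q : ℝ) p)) (k : ℕ) :
    ∃ s : E, oplus (ConvexEA.smul ((q : ℝ) ^ (k + 1)) p) (perp p) = some s ∧
      le (seqPow a k) s := by
  have hq0 : (0 : ℝ) ≤ q := by exact_mod_cast h0
  have hq1 : (q : ℝ) ≤ 1 := by exact_mod_cast h1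
  have hap : Commutes a p := hp.commutes_of_mem_sC hpa
  induction k with
  | zero =>
    obtain ⟨s, hs⟩ := exists_smul_oplus_perp p (pow_nonneg hq0 1) (pow_le_one₀ hq0 hq1)
    rw [pow_one] at hs ⊢
    exact ⟨s, hs, oplus_le_oplus hle (seq_le (perp p) a) hpa hs⟩
  | succ k ih =>
    obtain ⟨s, hs, hks⟩ := ih
    obtain ⟨s', hs'⟩ := exists_smul_oplus_perp p (pow_nonneg hq0 (k + 2)) (pow_le_one₀ hq0 hq1)
    have has := SEA.seq_oplus a _ _ s hs
    rw [← Rat.cast_pow, (preservesOplus_seq a).map_smul_rat p (pow_nonneg h0 _)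
      (pow_le_one₀ h0 h1), Rat.cast_pow] at has
    have hscaled : le (ConvexEA.smul ((q : ℝ) ^ (k + 1)) (SEA.seq a p))
        (ConvexEA.smul ((q : ℝ) ^ (k + 2)) p) := by
      have := (preservesOplus_smul (pow_nonneg hq0 (k + 1)) (pow_le_one₀ hq0 hq1)).map_le
        (hap ▸ hle)
      rwa [ConvexEA.smul_smul _ _ p hq0 hq1 (pow_nonneg hq0 _) (pow_le_one₀ hq0 hq1),
        ← pow_succ'] at this
    have hperp : le (SEA.seq a (perp p)) (perp p) :=
      SEA.comm_perp a p hap ▸ seq_le (perp p) a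
    exact ⟨s', hs', (seq_le_seq a hks).trans (oplus_le_oplus hscaled hperp has hs')⟩

lemma le_perp_of_forall_le_seqPow (harch : StronglyArchimedean E) {a b p : E} (hp : Sharp p)
    (hpa : a ∈ sC p) {q : ℚ} (h0 : 0 ≤ q) (h1 : q < 1)
    (hle : le (SEA.seq p a) (ConvexEA.smul (q : ℝ) p)) (hb : ∀ k : ℕ, le b (seqPow a k)) :
    le b (perp p) := by
  have hq0 : (0 : ℝ) ≤ q := by exact_mod_cast h0
  have hq1 : (q : ℝ) < 1 := by exact_mod_cast h1
  refine harch b (perp p) p fun n => ?_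
  have hε0 : (0 : ℝ) < 1 / ((n : ℝ) + 1) := by positivity
  have hε1 : 1 / ((n : ℝ) + 1) ≤ 1 := by
    rw [div_le_one (by positivity)]; linarith [(n.cast_nonneg : (0 : ℝ) ≤ n)]
  obtain ⟨k, hk⟩ := exists_pow_lt_of_lt_one hε0 hq1
  have hk' : (q : ℝ) ^ (k + 1) ≤ 1 / ((n : ℝ) + 1) :=
    (pow_le_pow_of_le_one hq0 hq1.le k.le_succ).trans hk.le
  obtain ⟨s, hs, hks⟩ := seqPow_le_smul_oplus_perp hp hpa h0 h1.le hle k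
  obtain ⟨d, hd⟩ := exists_smul_oplus_perp p hε0.le hε1
  refine ⟨d, oplus_comm (ConvexEA.smul (1 / ((n : ℝ) + 1)) p) (perp p) ▸ hd,
    (hb k).trans (hks.trans ?_)⟩
  exact oplus_le_oplus (smul_le_smul_of_le p (by positivity) hk' hε1) (le.refl _) hs hd

lemma sCommuteC_smul_one (a : E) {q : ℚ} (h0 : 0 ≤ q) (h1 : q ≤ 1) :
    sCommuteC a (ConvexEA.smul (q : ℝ) one) := by
  have hq0 : (0 : ℝ) ≤ q := by exact_mod_cast h0
  have hq1 : (q : ℝ) ≤ 1 := by exact_mod_cast h1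
  rintro p ⟨hp, -, -⟩ r ⟨-, -, hr⟩
  suffices hpr : p ∈ sC r from (mcompat_of_mem_sC hpr).symm
  apply hr p ⟨hp, ?_⟩
  show oplus (SEA.seq p _) (SEA.seq (perp p) _) = some _
  rw [(preservesOplus_seq p).map_smul_rat one h0 h1,
    (preservesOplus_seq (perp p)).map_smul_rat one h0 h1, seq_one, seq_one]
  exact ConvexEA.smul_oplus _ p (perp p) one hq0 hq1 (oplus_perp p)

lemma exists_sharp_comparison (hcomp : sBComparability E) (a : E) {q : ℚ} (h0 : 0 ≤ q)
    (h1 : q ≤ 1) : ∃ p : E, Sharp p ∧ a ∈ sC p ∧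
      le (SEA.seq p a) (ConvexEA.smul (q : ℝ) p) ∧
      le (ConvexEA.smul (q : ℝ) (perp p)) (SEA.seq (perp p) a) := by
  obtain ⟨p, ⟨hp, hpa, -⟩, -, hle, hge⟩ := hcomp.2 a _ (sCommuteC_smul_one a h0 h1)
  rw [(preservesOplus_seq _).map_smul_rat one h0 h1, seq_one] at hle hge
  exact ⟨p, hp, hpa, hle, hge⟩

lemma seq_eq_self_of_isProjCover (harch : StronglyArchimedean E) (hcomp : sBComparability E)
    {a b r : E} (hb : ∀ k : ℕ, le b (seqPow a k)) (hr : sIsProjCover b r) :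
    SEA.seq r a = r := by
  refine eq_of_le_of_forall_smul_le harch (seq_le r a) fun q h0 h1 => ?_
  have hq0 : (0 : ℝ) ≤ q := by exact_mod_cast h0
  have hq1 : (q : ℝ) ≤ 1 := by exact_mod_cast h1.le
  obtain ⟨p, hp, hpa, hle, hge⟩ := exists_sharp_comparison hcomp a h0 h1.le
  have hbp : le b (perp p) := le_perp_of_forall_le_seqPow harch hp hpa h0 h1 hle hb
  have hrp : le r (perp p) := (hr.2 (perp p) (sharp_perp hp)).mp hbp
  have hqr : le (ConvexEA.smul (q : ℝ) r) a :=
    ((preservesOplus_smul hq0 hq1).map_le hrp).trans (hge.trans (le_of_oplus_right hpa))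
  have := seq_le_seq r hqr
  rwa [(preservesOplus_seq r).map_smul_rat r h0 h1.le, hr.1.seq_self] at this

end Sequential

end EffectAlgebra

open EffectAlgebra in
theorem stmt11_general {E : Type u} [EffectAlgebra E] [SEA E] [ConvexEA E]
    (harch : StronglyArchimedean E) (hspec : sSpectral E)
    (a : E) :
    (∀ n : ℕ, le (seqPow a (n + 1)) (seqPow a n)) ∧
    (∀ m n : ℕ, Commutes (seqPow a m) (seqPow a n)) ∧
    ∃ f : E, sIsFloor a f ∧ IsInfSeq (seqPow a) f := by
  obtain ⟨hcover, hcomp⟩ := hspec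
  obtain ⟨p, hp⟩ := hcover (perp a)
  have hfloor := isFloor_perp_of_isProjCover hp
  refine ⟨seqPow_succ_le a, commutes_seqPow a, perp p, hfloor,
    le_seqPow_of_sharp_le hfloor.1 hfloor.2.1, fun b hb => ?_⟩
  obtain ⟨r, hr⟩ := hcover b
  have hra : le r a := le_of_seq_eq_self (seq_eq_self_of_isProjCover harch hcomp hb hr)
  exact ((hr.2 r hr.1).mpr (le.refl r)).trans (hfloor.2.2 r hr.1 hra)

open EffectAlgebra in
/-- in a spectral strongly archimedean convex SEA with property A, the
sequential powers of `a` form a descending sequence of mutually commuting elements whose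
infimum exists and equals the floor of `a`. Here `seqPow a k = a^(k+1)`. -/
theorem stmt11 {E : Type u} [EffectAlgebra E] [SEA E] [ConvexEA E]
    (harch : StronglyArchimedean E) (hA : PropertyA E) (hspec : sSpectral E)
    (a : E) :
    (∀ n : ℕ, le (seqPow a (n + 1)) (seqPow a n)) ∧
    (∀ m n : ℕ, Commutes (seqPow a m) (seqPow a n)) ∧
    ∃ f : E, sIsFloor a f ∧ IsInfSeq (seqPow a) f :=
  stmt11_general harch hspec a
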